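/- arXiv:1202.2103 — 3 statements merged into one kernel-verified Lean document; each statement's English description precedes it below -/
import Mathlib

section
/- Let k ≥ 2 and let K ⊆ ℓ²(F_n^+)^{⊗k} be the closed span of basis vectors ξ_{u_1} ⊗ ⋯ ⊗ ξ_{u_k} such that the words u_1,...,u_k have no common nonempty prefix. Then K is a wandering subspace for the tuple (L_1^{⊗k},...,L_n^{⊗k}): the subspaces {L_w^{⊗k} K : w ∈ F_n^+} are pairwise orthogonal. -/
/-! Two basis vectors `L_w^{⊗k} ξ_u` and `L_{w'}^{⊗k} ξ_{u'}` can only coincide if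
`w u_j = w' u'_j` for every `j`; then one of `w, w'` is a prefix of the other, say `w' = w t`,
and cancelling `w` gives `u_j = t u'_j` for all `j`, so `t = 1` because the `u_j` have no common
first letter. So for `w ≠ w'` the two images are distinct elements of an orthonormal basis, and
orthogonality passes to the closed spans by continuity. -/

namespace FreeMonoid

variable {α ι : Type*}

theorem exists_eq_of_mul_of_ne_one {t : FreeMonoid α} (ht : t ≠ 1) :
    ∃ i v, t = of i * v := by
  cases t using FreeMonoid.casesOn with
  | one => exact absurd rfl ht
  | of_mul i v => exact ⟨i, v, rfl⟩

theorem mul_eq_mul_iff {a b c d : FreeMonoid α} :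
    a * b = c * d ↔ (∃ t, c = a * t ∧ b = t * d) ∨ ∃ t, a = c * t ∧ d = t * b :=
  List.append_eq_append_iff

def HasCommonFirstLetter (u : ι → FreeMonoid α) : Prop :=
  ∃ i, ∀ j, ∃ v, u j = of i * v

theorem eq_one_of_forall_eq_mul {u u' : ι → FreeMonoid α} {t : FreeMonoid α}
    (hu : ¬ HasCommonFirstLetter u) (h : ∀ j, u j = t * u' j) : t = 1 := by
  by_contra ht
  obtain ⟨i, v, rfl⟩ := exists_eq_of_mul_of_ne_one ht
  exact hu ⟨i, fun j => ⟨v * u' j, by rw [h, mul_assoc]⟩⟩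

theorem eq_of_forall_mul_eq_mul [Nonempty ι] {u u' : ι → FreeMonoid α} {w w' : FreeMonoid α}
    (hu : ¬ HasCommonFirstLetter u) (hu' : ¬ HasCommonFirstLetter u')
    (h : ∀ j, w * u j = w' * u' j) : w = w' := by
  obtain ⟨j⟩ := ‹Nonempty ι›
  rcases mul_eq_mul_iff.1 (h j) with ⟨t, rfl, -⟩ | ⟨t, rfl, -⟩
  · rw [eq_one_of_forall_eq_mul hu fun j => mul_left_cancel ((h j).trans (mul_assoc _ _ _)),
      mul_one]
  · rw [eq_one_of_forall_eq_mul hu' fun j => mul_left_cancel ((h j).symm.trans (mul_assoc _ _ _)),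
      mul_one]

end FreeMonoid

theorem inner_map_map_eq_zero_of_mem_topologicalClosure_span {𝕜 E F : Type*} [RCLike 𝕜]
    [NormedAddCommGroup E] [InnerProductSpace 𝕜 E] [NormedAddCommGroup F] [InnerProductSpace 𝕜 F]
    {s t : Set E} (A B : E →L[𝕜] F) (h : ∀ a ∈ s, ∀ b ∈ t, inner 𝕜 (A a) (B b) = 0)
    {x y : E} (hx : x ∈ (Submodule.span 𝕜 s).topologicalClosure)
    (hy : y ∈ (Submodule.span 𝕜 t).topologicalClosure) : inner 𝕜 (A x) (B y) = 0 := by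
  have hsy : ∀ a ∈ s, inner 𝕜 (A a) (B y) = 0 := fun a ha =>
    ContinuousLinearMap.eqOn_closure_span (f := (innerSL 𝕜 (A a)).comp B) (g := 0)
      (h a ha) hy
  exact ContinuousLinearMap.eqOn_closure_span (f := (innerSLFlip 𝕜 (B y)).comp A) (g := 0) hsy hx

theorem stmt_5_general (n k : ℕ) (hk : 2 ≤ k) (Hk : Type*) [NormedAddCommGroup Hk]
    [InnerProductSpace ℂ Hk]
    (E : HilbertBasis (Fin k → FreeMonoid (Fin n)) ℂ Hk)
    (Lk : FreeMonoid (Fin n) → Hk →L[ℂ] Hk)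
    (hLk : ∀ w u, Lk w (E u) = E (fun j => w * u j)) :
    ∀ w w' : FreeMonoid (Fin n), w ≠ w' →
      ∀ x ∈ (Submodule.span ℂ
          (⇑E '' {u | ¬ ∃ i : Fin n, ∀ j, ∃ v, u j = FreeMonoid.of i * v})).topologicalClosure,
      ∀ y ∈ (Submodule.span ℂ
          (⇑E '' {u | ¬ ∃ i : Fin n, ∀ j, ∃ v, u j = FreeMonoid.of i * v})).topologicalClosure,
        (inner ℂ (Lk w x) (Lk w' y) : ℂ) = 0 := by
  intro w w' hww' x hx y hy
  have : Nonempty (Fin k) := ⟨⟨0, by omega⟩⟩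
  refine inner_map_map_eq_zero_of_mem_topologicalClosure_span (Lk w) (Lk w') ?_ hx hy
  rintro _ ⟨u, hu, rfl⟩ _ ⟨u', hu', rfl⟩
  rw [hLk, hLk]
  exact E.orthonormal.2 fun h => hww' (FreeMonoid.eq_of_forall_mul_eq_mul hu hu' (congrFun h))

/-- Let `k ≥ 2` and let `K ⊆ ℓ²(F_n^+)^{⊗k}` be the closed span of the basis
vectors `ξ_{u₁} ⊗ ⋯ ⊗ ξ_{u_k}` such that the words `u₁, …, u_k` have no common nonempty
prefix. Then `K` is wandering for the tuple `(L₁^{⊗k}, …, L_n^{⊗k})`: the subspaces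
`L_w^{⊗k} K`, `w ∈ F_n^+`, are pairwise orthogonal. The `k`-fold tensor power is modelled
by a Hilbert space with orthonormal (Hilbert) basis `E u` indexed by
`u : Fin k → F_n^+`, with `L_w^{⊗k} (E u) = E (fun j => w * u j)`. -/
theorem stmt_5 (n k : ℕ) (hk : 2 ≤ k) (Hk : Type*) [NormedAddCommGroup Hk]
    [InnerProductSpace ℂ Hk] [CompleteSpace Hk]
    (E : HilbertBasis (Fin k → FreeMonoid (Fin n)) ℂ Hk)
    (Lk : FreeMonoid (Fin n) → Hk →L[ℂ] Hk)
    (hLk : ∀ w u, Lk w (E u) = E (fun j => w * u j)) :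
    ∀ w w' : FreeMonoid (Fin n), w ≠ w' →
      ∀ x ∈ (Submodule.span ℂ
          (⇑E '' {u | ¬ ∃ i : Fin n, ∀ j, ∃ v, u j = FreeMonoid.of i * v})).topologicalClosure,
      ∀ y ∈ (Submodule.span ℂ
          (⇑E '' {u | ¬ ∃ i : Fin n, ∀ j, ∃ v, u j = FreeMonoid.of i * v})).topologicalClosure,
        (inner ℂ (Lk w x) (Lk w' y) : ℂ) = 0 :=
  stmt_5_general n k hk Hk E Lk hLk
end

section
/- Let k ≥ 2 and let K ⊆ ℓ²(F_n^+)^{⊗k} be the closed span of basis vectors ξ_{u_1} ⊗ ⋯ ⊗ ξ_{u_k} where u_1,...,u_k have no common nonempty prefix. Then ℓ²(F_n^+)^{⊗k} = ⊕_{w ∈ F_n^+} L_w^{⊗k} K, i.e., every basis vector ξ_{u_1}⊗⋯⊗ξ_{u_k} lies in L_w^{⊗k} K for w the longest common prefix of u_1,...,u_k. -/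
/-- With `K` the closed span of the basis vectors `ξ_{u₁} ⊗ ⋯ ⊗ ξ_{u_k}`
whose index words have no common nonempty prefix, one has
`ℓ²(F_n^+)^{⊗k} = ⊕_{w ∈ F_n^+} L_w^{⊗k} K`: every basis vector `ξ_{u₁} ⊗ ⋯ ⊗ ξ_{u_k}` lies
in `L_w^{⊗k} K` for `w` the longest common prefix of `u₁, …, u_k`, and the closure of the
sum of the subspaces `L_w^{⊗k} K` is everything. -/
theorem stmt_6 (n k : ℕ) (hk : 2 ≤ k) (Hk : Type*) [NormedAddCommGroup Hk]
    [InnerProductSpace ℂ Hk] [CompleteSpace Hk]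
    (E : HilbertBasis (Fin k → FreeMonoid (Fin n)) ℂ Hk)
    (Lk : FreeMonoid (Fin n) → Hk →L[ℂ] Hk)
    (hLk : ∀ w u, Lk w (E u) = E (fun j => w * u j))
    (K : Submodule ℂ Hk)
    (hK : K = (Submodule.span ℂ
        (⇑E '' {u | ¬ ∃ i : Fin n, ∀ j, ∃ v, u j = FreeMonoid.of i * v})).topologicalClosure) :
    (∀ (u : Fin k → FreeMonoid (Fin n)) (w : FreeMonoid (Fin n)),
        (∀ j, FreeMonoid.toList w <+: FreeMonoid.toList (u j)) →
        (∀ w' : FreeMonoid (Fin n),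
            (∀ j, FreeMonoid.toList w' <+: FreeMonoid.toList (u j)) →
            (FreeMonoid.toList w').length ≤ (FreeMonoid.toList w).length) →
        E u ∈ Submodule.map (Lk w : Hk →ₗ[ℂ] Hk) K) ∧
    (⨆ w : FreeMonoid (Fin n),
        Submodule.map (Lk w : Hk →ₗ[ℂ] Hk) K).topologicalClosure = ⊤ := by
  have main : ∀ (u : Fin k → FreeMonoid (Fin n)) (w : FreeMonoid (Fin n)),
      (∀ j, FreeMonoid.toList w <+: FreeMonoid.toList (u j)) →
      (∀ w' : FreeMonoid (Fin n),
          (∀ j, FreeMonoid.toList w' <+: FreeMonoid.toList (u j)) →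
          (FreeMonoid.toList w').length ≤ (FreeMonoid.toList w).length) →
      E u ∈ Submodule.map (Lk w : Hk →ₗ[ℂ] Hk) K := by
    intro u w hw hmax
    set v : Fin k → FreeMonoid (Fin n) := fun j =>
      FreeMonoid.ofList ((FreeMonoid.toList (u j)).drop (FreeMonoid.toList w).length) with hv
    have huv : ∀ j, w * v j = u j := by
      intro j
      apply FreeMonoid.toList.injective
      rw [FreeMonoid.toList_mul]
      obtain ⟨t, ht⟩ := hw j
      simp only [hv, FreeMonoid.toList_ofList]
      rw [← ht]
      simp
    have hvK : E v ∈ K := by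
      rw [hK]
      apply Submodule.le_topologicalClosure
      apply Submodule.subset_span
      refine ⟨v, ?_, rfl⟩
      intro ⟨i, hi⟩
      have hw' : ∀ j, FreeMonoid.toList (w * FreeMonoid.of i) <+: FreeMonoid.toList (u j) := by
        intro j
        obtain ⟨t, ht⟩ := hi j
        refine ⟨FreeMonoid.toList t, ?_⟩
        rw [← huv j, ht]
        simp [FreeMonoid.toList_mul, FreeMonoid.toList_of]
      have := hmax _ hw'
      simp [FreeMonoid.toList_mul, FreeMonoid.toList_of] at this
    refine ⟨E v, hvK, ?_⟩
    have := hLk w v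
    simp only [huv] at this
    simpa using this
  refine ⟨main, ?_⟩
  apply le_antisymm le_top
  have hE : ∀ u : Fin k → FreeMonoid (Fin n),
      E u ∈ ⨆ w : FreeMonoid (Fin n), Submodule.map (Lk w : Hk →ₗ[ℂ] Hk) K := by
    intro u
    have j0 : Fin k := ⟨0, by omega⟩
    classical
    set P : ℕ → Prop := fun m => ∀ j, (FreeMonoid.toList (u j0)).take m <+: FreeMonoid.toList (u j)
      with hP
    have hP0 : P 0 := fun j => by simp
    set m := Nat.findGreatest P (FreeMonoid.toList (u j0)).length with hm
    set w : FreeMonoid (Fin n) := FreeMonoid.ofList ((FreeMonoid.toList (u j0)).take m) with hwdef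
    have hPm : P m := Nat.findGreatest_spec (Nat.zero_le _) hP0
    have hw : ∀ j, FreeMonoid.toList w <+: FreeMonoid.toList (u j) := by
      intro j; simpa [hwdef] using hPm j
    have hmax : ∀ w' : FreeMonoid (Fin n),
        (∀ j, FreeMonoid.toList w' <+: FreeMonoid.toList (u j)) →
        (FreeMonoid.toList w').length ≤ (FreeMonoid.toList w).length := by
      intro w' hw'
      have hlen : (FreeMonoid.toList w').length ≤ (FreeMonoid.toList (u j0)).length :=
        (hw' j0).length_le
      have hPw' : P (FreeMonoid.toList w').length := by
        intro j
        have : (FreeMonoid.toList (u j0)).take (FreeMonoid.toList w').length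
            = FreeMonoid.toList w' := (List.prefix_iff_eq_take.mp (hw' j0)).symm
        rw [this]; exact hw' j
      have hle : (FreeMonoid.toList w').length ≤ m := Nat.le_findGreatest hlen hPw'
      simp only [hwdef, FreeMonoid.toList_ofList, List.length_take]
      omega
    exact Submodule.mem_iSup_of_mem w (main u w hw hmax)
  have hspan : Submodule.span ℂ (Set.range ⇑E)
      ≤ ⨆ w : FreeMonoid (Fin n), Submodule.map (Lk w : Hk →ₗ[ℂ] Hk) K := by
    rw [Submodule.span_le]
    rintro _ ⟨u, rfl⟩
    exact hE u
  calc (⊤ : Submodule ℂ Hk) = (Submodule.span ℂ (Set.range ⇑E)).topologicalClosure := by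
        rw [← E.dense_span]
    _ ≤ _ := Submodule.topologicalClosure_mono hspan
end

section
/- If n ≥ 2 and k ≥ 2, the wandering subspace K (spanned by ξ_{u_1}⊗⋯⊗ξ_{u_k} with u_1,...,u_k having no common nonempty prefix) is infinite-dimensional. -/
/-- If `n ≥ 2` and `k ≥ 2`, the wandering subspace `K` (the closed span of the
basis vectors `ξ_{u₁} ⊗ ⋯ ⊗ ξ_{u_k}` with `u₁, …, u_k` having no common nonempty prefix)
is infinite-dimensional. -/
theorem stmt_8 (n k : ℕ) (hn : 2 ≤ n) (hk : 2 ≤ k) (Hk : Type*) [NormedAddCommGroup Hk]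
    [InnerProductSpace ℂ Hk] [CompleteSpace Hk]
    (E : HilbertBasis (Fin k → FreeMonoid (Fin n)) ℂ Hk) :
    ¬ FiniteDimensional ℂ
      ((Submodule.span ℂ
        (⇑E '' {u | ¬ ∃ i : Fin n, ∀ j, ∃ v, u j = FreeMonoid.of i * v})).topologicalClosure) := by
  intro hfin
  set S : Set (Fin k → FreeMonoid (Fin n)) :=
    {u | ¬ ∃ i : Fin n, ∀ j, ∃ v, u j = FreeMonoid.of i * v} with hS
  set P := (Submodule.span ℂ (⇑E '' S)).topologicalClosure with hP
  -- indices 0 and 1 in Fin n and Fin k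
  have hn0 : (0 : ℕ) < n := by omega
  have hn1 : (1 : ℕ) < n := by omega
  have hk1 : (1 : ℕ) < k := by omega
  have hk0 : (0 : ℕ) < k := by omega
  -- the family of words
  let u : ℕ → (Fin k → FreeMonoid (Fin n)) := fun m j =>
    if j = (⟨0, hk0⟩ : Fin k) then (FreeMonoid.of (⟨0, hn0⟩ : Fin n)) ^ (m + 1)
    else FreeMonoid.of (⟨1, hn1⟩ : Fin n)
  have hlen : ∀ m, (u m (⟨0, hk0⟩ : Fin k)).length = m + 1 := by
    intro m
    simp only [u, if_pos rfl]
    induction m with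
    | zero => rfl
    | succ m ih =>
        rw [pow_succ, FreeMonoid.length_mul, ih]
        rfl
  have huinj : Function.Injective u := by
    intro a b hab
    have := congrArg (fun f => (f (⟨0, hk0⟩ : Fin k)).length) hab
    simp only [hlen] at this
    omega
  have humem : ∀ m, u m ∈ S := by
    intro m ⟨i, hi⟩
    obtain ⟨v0, hv0⟩ := hi ⟨0, hk0⟩
    obtain ⟨v1, hv1⟩ := hi ⟨1, hk1⟩
    -- u m 0 starts with ⟨0,_⟩, u m ⟨1,_⟩ starts with ⟨1,_⟩
    have h1 : u m ⟨1, hk1⟩ = FreeMonoid.of (⟨1, hn1⟩ : Fin n) := by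
      simp only [u]
      rw [if_neg]
      intro h
      exact absurd (congrArg Fin.val h) (by simp)
    have h0 : u m (⟨0, hk0⟩ : Fin k) = FreeMonoid.of (⟨0, hn0⟩ : Fin n) *
        (FreeMonoid.of (⟨0, hn0⟩ : Fin n)) ^ m := by
      simp only [u, if_pos rfl, pow_succ']
    -- first letters
    have e0 : (FreeMonoid.toList (u m (⟨0, hk0⟩ : Fin k))).head? = some ⟨0, hn0⟩ := by
      rw [h0]; rfl
    have e0' : (FreeMonoid.toList (u m (⟨0, hk0⟩ : Fin k))).head? = some i := by
      rw [hv0]; rfl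
    have e1 : (FreeMonoid.toList (u m ⟨1, hk1⟩)).head? = some ⟨1, hn1⟩ := by
      rw [h1]; rfl
    have e1' : (FreeMonoid.toList (u m ⟨1, hk1⟩)).head? = some i := by
      rw [hv1]; rfl
    have : (⟨0, hn0⟩ : Fin n) = i := by
      have := e0.symm.trans e0'
      exact Option.some.inj this
    have h2 : (⟨1, hn1⟩ : Fin n) = i := by
      have := e1.symm.trans e1'
      exact Option.some.inj this
    have : (⟨0, hn0⟩ : Fin n) = (⟨1, hn1⟩ : Fin n) := this.trans h2.symm
    exact absurd (congrArg Fin.val this) (by simp)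
  -- E (u m) lies in P
  have hmem : ∀ m, E (u m) ∈ P := fun m =>
    Submodule.le_topologicalClosure _
      (Submodule.subset_span ⟨u m, humem m, rfl⟩)
  -- linear independence
  have hli : LinearIndependent ℂ (fun m : ℕ => E (u m)) :=
    (E.orthonormal.linearIndependent).comp u huinj
  let g : ℕ → P := fun m => ⟨E (u m), hmem m⟩
  have hlig : LinearIndependent ℂ g := by
    apply LinearIndependent.of_comp P.subtype
    exact hli
  have : Finite ℕ := hlig.finite
  exact absurd this (by rw [not_finite_iff_infinite]; infer_instance)
end
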